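/- If sup_{n,m} ‖A_{n,m}† A‖ ≤ C, then for every x† ∈ N(A)^⊥ one has x_{n,m} = A_{n,m}† A x† → x† as n, m → ∞. Together with the converse, uniform boundedness of A_{n,m}† A is equivalent to global convergence of the projection method. -/

import Mathlib

open ContinuousLinearMap Filter Topology

noncomputable section

/-- Orthogonal projection onto a subspace, as an endomorphism. -/
noncomputable def proj {E : Type*} [NormedAddCommGroup E] [InnerProductSpace ℝ E]
    (K : Submodule ℝ E) [K.HasOrthogonalProjection] : E →L[ℝ] E :=
  K.subtypeL.comp (K.orthogonalProjectionOnto : E →L[ℝ] K)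

/-- The discretized operator `A_{n,m} = Q_m A P_n`. -/
noncomputable def Amn {X Y : Type*} [NormedAddCommGroup X] [InnerProductSpace ℝ X]
    [NormedAddCommGroup Y] [InnerProductSpace ℝ Y]
    (A : X →L[ℝ] Y) (Xn : Submodule ℝ X) (Ym : Submodule ℝ Y)
    [Xn.HasOrthogonalProjection] [Ym.HasOrthogonalProjection] : X →L[ℝ] Y :=
  (proj Ym).comp (A.comp (proj Xn))

/-- `B` is the Moore–Penrose pseudoinverse of `A` (the four Penrose conditions). -/
def IsPseudoinverse {X Y : Type*} [NormedAddCommGroup X] [InnerProductSpace ℝ X]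
    [CompleteSpace X] [NormedAddCommGroup Y] [InnerProductSpace ℝ Y] [CompleteSpace Y]
    (A : X →L[ℝ] Y) (B : Y →L[ℝ] X) : Prop :=
  A.comp (B.comp A) = A ∧ B.comp (A.comp B) = B ∧
  ContinuousLinearMap.adjoint (A.comp B) = A.comp B ∧
  ContinuousLinearMap.adjoint (B.comp A) = B.comp A

/-- If `⟪a, a⟫ = ⟪a, b⟫` then `‖a‖ ≤ ‖b‖`. -/
lemma norm_le_of_inner_eq {E : Type*} [NormedAddCommGroup E] [InnerProductSpace ℝ E]
    (a b : E) (h : (inner ℝ a a : ℝ) = inner ℝ a b) : ‖a‖ ≤ ‖b‖ := by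
  have h1 := real_inner_self_eq_norm_mul_norm a
  have h2 := real_inner_le_norm a b
  nlinarith [norm_nonneg a, norm_nonneg b]

/-- proj is symmetric. -/
lemma proj_symm {E : Type*} [NormedAddCommGroup E] [InnerProductSpace ℝ E]
    (K : Submodule ℝ E) [K.HasOrthogonalProjection] (u v : E) :
    (inner ℝ (proj K u) v : ℝ) = inner ℝ u (proj K v) :=
  Submodule.inner_starProjection_left_eq_right K u v

lemma proj_idem {E : Type*} [NormedAddCommGroup E] [InnerProductSpace ℝ E]
    (K : Submodule ℝ E) [K.HasOrthogonalProjection] (u : E) :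
    proj K (proj K u) = proj K u := by
  exact Submodule.starProjection_eq_self_iff.mpr (by simp [_root_.proj])

lemma proj_adjoint {E : Type*} [NormedAddCommGroup E] [InnerProductSpace ℝ E] [CompleteSpace E]
    (K : Submodule ℝ E) [K.HasOrthogonalProjection] :
    ContinuousLinearMap.adjoint (proj K) = proj K := by
  rw [← ContinuousLinearMap.star_eq_adjoint]
  exact ContinuousLinearMap.isSelfAdjoint_iff_isSymmetric.mpr
    (Submodule.starProjection_isSymmetric K)

/-- A symmetric idempotent is a contraction. -/
lemma sym_idem_contraction {E : Type*} [NormedAddCommGroup E] [InnerProductSpace ℝ E]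
    (T : E →L[ℝ] E) (hsym : ∀ u v : E, (inner ℝ (T u) v : ℝ) = inner ℝ u (T v))
    (hidem : ∀ v, T (T v) = T v) (v : E) : ‖T v‖ ≤ ‖v‖ := by
  refine norm_le_of_inner_eq (T v) v ?_
  calc (inner ℝ (T v) (T v) : ℝ) = inner ℝ v (T (T v)) := hsym v (T v)
    _ = inner ℝ v (T v) := by rw [hidem]
    _ = inner ℝ (T v) v := real_inner_comm _ _

/-- Complement of a symmetric idempotent is a contraction. -/
lemma sym_idem_compl_contraction {E : Type*} [NormedAddCommGroup E] [InnerProductSpace ℝ E]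
    (T : E →L[ℝ] E) (hsym : ∀ u v : E, (inner ℝ (T u) v : ℝ) = inner ℝ u (T v))
    (hidem : ∀ v, T (T v) = T v) (v : E) : ‖v - T v‖ ≤ ‖v‖ := by
  refine norm_le_of_inner_eq (v - T v) v ?_
  have h0 : (inner ℝ (v - T v) (T v) : ℝ) = 0 := by
    have := hsym (v - T v) v
    -- ⟪T (v - T v), v⟫ = ⟪v - T v, T v⟫
    rw [← this, map_sub, hidem, sub_self, inner_zero_left]
  rw [inner_sub_right, h0, sub_zero]

theorem stmt_12 {X Y : Type*} [NormedAddCommGroup X] [InnerProductSpace ℝ X] [CompleteSpace X]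
    [NormedAddCommGroup Y] [InnerProductSpace ℝ Y] [CompleteSpace Y]
    (A : X →L[ℝ] Y) (Xn : ℕ → Submodule ℝ X) (Ym : ℕ → Submodule ℝ Y)
    [∀ n, FiniteDimensional ℝ (Xn n)] [∀ m, FiniteDimensional ℝ (Ym m)]
    (hX : Monotone Xn) (hY : Monotone Ym)
    (hdX : Dense (↑(⨆ n, Xn n) : Set X)) (hdY : Dense (↑(⨆ m, Ym m) : Set Y))
    (Adag : ℕ → ℕ → (Y →L[ℝ] X))
    (hdag : ∀ n m, IsPseudoinverse (Amn A (Xn n) (Ym m)) (Adag n m))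
    (C : ℝ) (hC : ∀ n m : ℕ, ‖(Adag n m).comp A‖ ≤ C) :
    ∀ xd ∈ (LinearMap.ker (A : X →ₗ[ℝ] Y))ᗮ,
      Tendsto (fun p : ℕ × ℕ => Adag p.1 p.2 (A xd)) atTop (nhds xd) := by
  intro xd hxd
  have hC0 : 0 ≤ C := le_trans (norm_nonneg _) (hC 0 0)
  -- projections converge
  have hPn : ∀ u : X, Tendsto (fun n => _root_.proj (Xn n) u) atTop (𝓝 u) := by
    intro u
    have := Submodule.starProjection_tendsto_self (𝕜 := ℝ) Xn hX u
      (le_of_eq (Submodule.dense_iff_topologicalClosure_eq_top.mp hdX).symm)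
    exact this
  have hQm : ∀ u : Y, Tendsto (fun m => _root_.proj (Ym m) u) atTop (𝓝 u) := by
    intro u
    have := Submodule.starProjection_tendsto_self (𝕜 := ℝ) Ym hY u
      (le_of_eq (Submodule.dense_iff_topologicalClosure_eq_top.mp hdY).symm)
    exact this
  -- density of range of adjoint in (ker A)ᗮ
  have hker : (LinearMap.range ((ContinuousLinearMap.adjoint A : Y →L[ℝ] X) : Y →ₗ[ℝ] X))ᗮ = LinearMap.ker (A : X →ₗ[ℝ] Y) := by
    ext v
    simp only [Submodule.mem_orthogonal, LinearMap.mem_range, LinearMap.mem_ker]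
    constructor
    · intro h
      have h2 : (inner ℝ (ContinuousLinearMap.adjoint A (A v)) v : ℝ) = 0 :=
        h _ ⟨A v, rfl⟩
      rw [ContinuousLinearMap.adjoint_inner_left] at h2
      exact inner_self_eq_zero.mp h2
    · rintro h u ⟨y, rfl⟩
      rw [ContinuousLinearMap.coe_coe] at h ⊢
      rw [ContinuousLinearMap.adjoint_inner_left, h, inner_zero_right]
  have hdense : xd ∈ closure ((LinearMap.range ((ContinuousLinearMap.adjoint A : Y →L[ℝ] X) : Y →ₗ[ℝ] X) :
      Submodule ℝ X) : Set X) := by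
    have : xd ∈ (LinearMap.range ((ContinuousLinearMap.adjoint A : Y →L[ℝ] X) : Y →ₗ[ℝ] X) :
        Submodule ℝ X).topologicalClosure := by
      rw [← Submodule.orthogonal_orthogonal_eq_closure, hker]
      exact hxd
    exact this
  -- key estimate
  have key : ∀ n m (z : Y), ‖Adag n m (A xd) - xd‖ ≤
      C * ‖xd - _root_.proj (Xn n) xd‖ +
      ‖xd - _root_.proj (Xn n) (ContinuousLinearMap.adjoint A (_root_.proj (Ym m) z))‖ := by
    intro n m z
    obtain ⟨h1, h2, h3, h4⟩ := hdag n m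
    set D := Adag n m with hD
    set Bnm := Amn A (Xn n) (Ym m) with hB
    set P := D.comp Bnm with hP
    -- D ∘ Qm = D
    have hSQ : (Bnm.comp D).comp (_root_.proj (Ym m)) = Bnm.comp D := by
      have e1 : (_root_.proj (Ym m)).comp (Bnm.comp D) = Bnm.comp D := by
        ext u
        show _root_.proj (Ym m) (Bnm (D u)) = Bnm (D u)
        show _root_.proj (Ym m) (_root_.proj (Ym m) (A (_root_.proj (Xn n) (D u)))) = _
        exact proj_idem _ _
      have e2 := congrArg ContinuousLinearMap.adjoint e1
      rw [ContinuousLinearMap.adjoint_comp, proj_adjoint, h3] at e2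
      exact e2
    have hDQ : ∀ w : Y, D (_root_.proj (Ym m) w) = D w := by
      intro w
      have e3 : (D.comp (Bnm.comp D)).comp (_root_.proj (Ym m)) = D.comp (Bnm.comp D) := by
        have : D.comp ((Bnm.comp D).comp (_root_.proj (Ym m))) = D.comp (Bnm.comp D) := by
          rw [hSQ]
        ext u
        have := congrArg (fun T => T u) this
        exact this
      rw [h2] at e3
      exact congrArg (fun T => T w) e3
    -- P is symmetric and idempotent
    have hPsym : ∀ u v : X, (inner ℝ (P u) v : ℝ) = inner ℝ u (P v) := by
      intro u v
      have := ContinuousLinearMap.adjoint_inner_left P v u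
      rw [h4] at this
      exact this
    have hPidem : ∀ v, P (P v) = P v := by
      intro v
      have hinner : Bnm (D (Bnm v)) = Bnm v := congrArg (fun T => T v) h1
      show D (Bnm (D (Bnm v))) = D (Bnm v)
      rw [hinner]
    -- P fixes adjoint Bnm z, and adjoint Bnm z = Pn (A† (Qm z))
    have hPA : P (ContinuousLinearMap.adjoint Bnm z) = ContinuousLinearMap.adjoint Bnm z := by
      have e := congrArg ContinuousLinearMap.adjoint h1
      rw [ContinuousLinearMap.adjoint_comp, h4] at e
      exact congrArg (fun T => T z) e
    have hBadj : ContinuousLinearMap.adjoint Bnm z =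
        _root_.proj (Xn n) (ContinuousLinearMap.adjoint A (_root_.proj (Ym m) z)) := by
      have : ContinuousLinearMap.adjoint Bnm =
          ((_root_.proj (Xn n)).comp ((ContinuousLinearMap.adjoint A).comp (_root_.proj (Ym m)))) := by
        rw [hB, Amn, ContinuousLinearMap.adjoint_comp, ContinuousLinearMap.adjoint_comp,
          proj_adjoint, proj_adjoint]
        ext u; rfl
      rw [this]; rfl
    -- splitting
    have hPx : P xd = D (A (_root_.proj (Xn n) xd)) := by
      show D (_root_.proj (Ym m) (A (_root_.proj (Xn n) xd))) = _
      rw [hDQ]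
    have hsplit : Adag n m (A xd) - xd =
        (D.comp A) (xd - _root_.proj (Xn n) xd) + (P xd - xd) := by
      rw [hPx]
      simp only [ContinuousLinearMap.comp_apply, map_sub]
      abel
    have b1 : ‖(D.comp A) (xd - _root_.proj (Xn n) xd)‖ ≤ C * ‖xd - _root_.proj (Xn n) xd‖ :=
      le_trans ((D.comp A).le_opNorm _)
        (mul_le_mul_of_nonneg_right (hC n m) (norm_nonneg _))
    have b2 : ‖P xd - xd‖ ≤ ‖xd - ContinuousLinearMap.adjoint Bnm z‖ := by
      have e : xd - P xd = (xd - ContinuousLinearMap.adjoint Bnm z) -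
          P (xd - ContinuousLinearMap.adjoint Bnm z) := by
        rw [map_sub, hPA]
        abel
      rw [norm_sub_rev, e]
      exact sym_idem_compl_contraction P hPsym hPidem _
    calc ‖Adag n m (A xd) - xd‖
        ≤ ‖(D.comp A) (xd - _root_.proj (Xn n) xd)‖ + ‖P xd - xd‖ := by
          rw [hsplit]; exact norm_add_le _ _
      _ ≤ C * ‖xd - _root_.proj (Xn n) xd‖ + ‖xd - ContinuousLinearMap.adjoint Bnm z‖ :=
          add_le_add b1 b2
      _ = _ := by rw [hBadj]
  -- epsilon argument
  rw [Metric.tendsto_nhds]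
  intro ε hε
  obtain ⟨b, hb, hbd⟩ := Metric.mem_closure_iff.mp hdense (ε/4) (by linarith)
  obtain ⟨y, rfl⟩ := hb
  set v := ContinuousLinearMap.adjoint A y with hv
  have hy : ‖xd - v‖ < ε/4 := by rw [← dist_eq_norm]; exact hbd
  -- choose m₀
  have hAQ : Tendsto (fun m => ContinuousLinearMap.adjoint A (_root_.proj (Ym m) y)) atTop (𝓝 v) :=
    ((ContinuousLinearMap.adjoint A).continuous.tendsto y).comp (hQm y)
  obtain ⟨m₀, hm₀⟩ := (Metric.tendsto_atTop.mp hAQ) (ε/4) (by linarith)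
  obtain ⟨n₀, hn₀⟩ := (Metric.tendsto_atTop.mp (hPn v)) (ε/4) (by linarith)
  obtain ⟨n₁, hn₁⟩ := (Metric.tendsto_atTop.mp (hPn xd)) (ε/(4*(C+1)))
    (by positivity)
  rw [eventually_atTop]
  refine ⟨(max n₀ n₁, m₀), ?_⟩
  rintro ⟨n, m⟩ hp
  obtain ⟨hpn, hpm⟩ := hp
  simp only at hpn hpm
  have hn0 : n₀ ≤ n := le_trans (le_max_left _ _) hpn
  have hn1 : n₁ ≤ n := le_trans (le_max_right _ _) hpn
  rw [dist_eq_norm]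
  have t1 : ‖xd - _root_.proj (Xn n) xd‖ < ε/(4*(C+1)) := by
    rw [norm_sub_rev, ← dist_eq_norm]; exact hn₁ n hn1
  have t1' : C * ‖xd - _root_.proj (Xn n) xd‖ < ε/4 := by
    have h4C : (0:ℝ) < 4*(C+1) := by linarith
    rw [lt_div_iff₀ h4C] at t1
    nlinarith [norm_nonneg (xd - _root_.proj (Xn n) xd)]
  have t2 : ‖v - _root_.proj (Xn n) v‖ < ε/4 := by
    rw [norm_sub_rev, ← dist_eq_norm]; exact hn₀ n hn0
  set w' := ContinuousLinearMap.adjoint A (_root_.proj (Ym m) y) with hw'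
  have t3 : ‖v - w'‖ < ε/4 := by
    rw [norm_sub_rev, ← dist_eq_norm]; exact hm₀ m hpm
  have t4 : ‖_root_.proj (Xn n) v - _root_.proj (Xn n) w'‖ ≤ ‖v - w'‖ := by
    have h := sym_idem_contraction (_root_.proj (Xn n)) (proj_symm _) (proj_idem _) (v - w')
    rw [map_sub] at h
    exact h
  calc ‖Adag n m (A xd) - xd‖
      ≤ C * ‖xd - _root_.proj (Xn n) xd‖ + ‖xd - _root_.proj (Xn n) w'‖ := key n m y
    _ ≤ C * ‖xd - _root_.proj (Xn n) xd‖ +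
        (‖xd - v‖ + ‖v - _root_.proj (Xn n) v‖ + ‖_root_.proj (Xn n) v - _root_.proj (Xn n) w'‖) := by
        have : ‖xd - _root_.proj (Xn n) w'‖ ≤
            ‖xd - v‖ + ‖v - _root_.proj (Xn n) v‖ + ‖_root_.proj (Xn n) v - _root_.proj (Xn n) w'‖ := by
          have := norm_sub_le_norm_sub_add_norm_sub xd v (_root_.proj (Xn n) w')
          have h2 := norm_sub_le_norm_sub_add_norm_sub v (_root_.proj (Xn n) v) (_root_.proj (Xn n) w')
          linarith
        linarith
    _ < ε := by
        have := le_trans t4 (le_of_lt t3)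
        linarith
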